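/- Explicit solution of the matrix Riccati equation Ṁ = a M² + b M: let a, b be complex scalars with a ≠ 0 and b ≠ 0, let M₀ be an invertible k×k complex matrix, and let I ⊆ ℝ be an interval containing 0 on which the matrix N(t) := M₀⁻¹ e^{−b t} + (a/b)( e^{−b t} − 1 )·1 is invertible. Then M(t) := N(t)⁻¹ satisfies M(0) = M₀ and Ṁ(t) = a M(t)² + b M(t) for all t in I. -/

import Mathlib

/-!
Since `N` solves the linear equation `Ṅ = -(b N + a)`, its inverse `M = N⁻¹` has
`Ṁ = -M Ṅ M = M (b N + a) M = b M + a M²`. The derivative of the inverse comes from the slope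
identity `M(s) - M(t) = M(s) (N(t) - N(s)) M(t)` together with the continuity of `M` at `t`.
-/

open Matrix

attribute [local instance] Matrix.normedAddCommGroup Matrix.normedSpace

noncomputable section

open Filter Topology

section MatrixInverse

theorem ContinuousWithinAt.matrix_inv {X 𝕂 n : Type*} [TopologicalSpace X] [Field 𝕂]
    [TopologicalSpace 𝕂] [IsTopologicalDivisionRing 𝕂] [Fintype n]
    [DecidableEq n] {N : X → Matrix n n 𝕂} {s : Set X} {t : X}
    (hN : ContinuousWithinAt N s t) (ht : IsUnit (N t)) :
    ContinuousWithinAt (fun x => (N x)⁻¹) s t := by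
  have hdet : (N t).det ≠ 0 := ((isUnit_iff_isUnit_det _).mp ht).ne_zero
  refine (continuousAt_matrix_inv _ ?_).comp_continuousWithinAt hN
  simpa only [Ring.inverse_eq_inv'] using continuousAt_inv₀ hdet

theorem ContinuousWithinAt.eventually_isUnit_matrix {X 𝕂 n : Type*} [TopologicalSpace X]
    [Field 𝕂] [TopologicalSpace 𝕂] [IsTopologicalRing 𝕂] [T1Space 𝕂] [Fintype n]
    [DecidableEq n] {N : X → Matrix n n 𝕂} {s : Set X} {t : X}
    (hN : ContinuousWithinAt N s t) (ht : IsUnit (N t)) : ∀ᶠ x in 𝓝[s] t, IsUnit (N x) := by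
  have hdet : ContinuousWithinAt (fun x => (N x).det) s t :=
    continuous_id.matrix_det.continuousAt.comp_continuousWithinAt hN
  filter_upwards [hdet.eventually_ne ((isUnit_iff_isUnit_det _).mp ht).ne_zero] with x hx
  exact (isUnit_iff_isUnit_det _).mpr hx.isUnit

variable {𝕜 𝕂 n : Type*} [NontriviallyNormedField 𝕜] [NormedField 𝕂] [NormedAlgebra 𝕜 𝕂]
  [Fintype n] [DecidableEq n] {N : 𝕜 → Matrix n n 𝕂} {s : Set 𝕜} {t : 𝕜}

theorem HasDerivWithinAt.matrix_inv {N' : Matrix n n 𝕂} (hN : HasDerivWithinAt N N' s t)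
    (ht : IsUnit (N t)) :
    HasDerivWithinAt (fun x => (N x)⁻¹) (-((N t)⁻¹ * N' * (N t)⁻¹)) s t := by
  have hNc := hN.continuousWithinAt
  have hMc : Tendsto (fun x => (N x)⁻¹) (𝓝[s \ {t}] t) (𝓝 (N t)⁻¹) :=
    (hNc.matrix_inv ht).mono Set.sdiff_subset
  have hslope : Tendsto (slope N t) (𝓝[s \ {t}] t) (𝓝 N') :=
    hasDerivWithinAt_iff_tendsto_slope.mp hN
  refine hasDerivWithinAt_iff_tendsto_slope.mpr <|
    (((hMc.mul hslope).mul tendsto_const_nhds).neg).congr' ?_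
  filter_upwards [nhdsWithin_mono t Set.sdiff_subset (hNc.eventually_isUnit_matrix ht)]
    with x hx
  rw [slope_def_module, slope_def_module, Matrix.inv_sub_inv (iff_of_true hx ht),
    ← neg_sub (N x) (N t)]
  simp only [Matrix.mul_neg, Matrix.neg_mul, Matrix.mul_smul, Matrix.smul_mul, smul_neg]

theorem HasDerivWithinAt.matrix_inv_riccati {a b : 𝕂}
    (hN : HasDerivWithinAt N (-(b • N t + a • 1)) s t) (ht : IsUnit (N t)) :
    HasDerivWithinAt (fun x => (N x)⁻¹) (a • ((N t)⁻¹ * (N t)⁻¹) + b • (N t)⁻¹) s t := by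
  convert hN.matrix_inv ht using 1
  have hNM : N t * (N t)⁻¹ = 1 := mul_nonsing_inv _ ((isUnit_iff_isUnit_det _).mp ht)
  simp only [Matrix.mul_neg, Matrix.neg_mul, neg_neg, Matrix.mul_add, Matrix.add_mul,
    Matrix.mul_smul, Matrix.smul_mul, Matrix.mul_one, Matrix.mul_assoc, hNM]
  abel

end MatrixInverse

section Riccati

variable {n : Type*} [DecidableEq n]

def riccatiDenom (a b : ℂ) (A : Matrix n n ℂ) (t : ℝ) : Matrix n n ℂ :=
  Complex.exp (-b * t) • A + (a / b * (Complex.exp (-b * t) - 1)) • 1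

theorem riccatiDenom_zero (a b : ℂ) (A : Matrix n n ℂ) : riccatiDenom a b A 0 = A := by
  simp [riccatiDenom]

theorem hasDerivAt_riccatiDenom [Fintype n] {b : ℂ} (hb : b ≠ 0) (a : ℂ) (A : Matrix n n ℂ)
    (t : ℝ) : HasDerivAt (riccatiDenom a b A) (-(b • riccatiDenom a b A t + a • 1)) t := by
  have hexp : HasDerivAt (fun s : ℝ => Complex.exp (-b * s)) (Complex.exp (-b * t) * (-b * 1)) t :=
    (((hasDerivAt_id t).ofReal_comp).const_mul (-b)).cexp
  refine ((hexp.smul_const A).add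
    (((hexp.sub_const 1).const_mul (a / b)).smul_const 1)).congr_deriv ?_
  simp only [riccatiDenom]
  match_scalars <;> field_simp; ring

end Riccati

theorem solution_matrix_riccati (k : ℕ) (a b : ℂ) (hb : b ≠ 0)
    (M₀ : Matrix (Fin k) (Fin k) ℂ) (hM₀ : IsUnit M₀)
    (I : Set ℝ)
    (Nf : ℝ → Matrix (Fin k) (Fin k) ℂ)
    (hN : ∀ t : ℝ, Nf t = Complex.exp (-b * t) • M₀⁻¹
      + (a / b * (Complex.exp (-b * t) - 1)) • (1 : Matrix (Fin k) (Fin k) ℂ))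
    (hNinv : ∀ t ∈ I, IsUnit (Nf t))
    (M : ℝ → Matrix (Fin k) (Fin k) ℂ)
    (hM : ∀ t, M t = (Nf t)⁻¹) :
    M 0 = M₀ ∧
    ∀ t ∈ I, HasDerivWithinAt M (a • (M t * M t) + b • M t) I t := by
  have hNf : Nf = riccatiDenom a b M₀⁻¹ := funext hN
  have hMf : M = fun t => (Nf t)⁻¹ := funext hM
  subst hNf hMf
  refine ⟨?_, fun t ht => ?_⟩
  · show (riccatiDenom a b M₀⁻¹ 0)⁻¹ = M₀
    rw [riccatiDenom_zero, nonsing_inv_nonsing_inv _ ((isUnit_iff_isUnit_det _).mp hM₀)]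
  · exact (hasDerivAt_riccatiDenom hb a M₀⁻¹ t).hasDerivWithinAt.matrix_inv_riccati
      (hNinv t ht)
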